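/- Consider a coloring model on n vertices in which the color space of each vertex v is an arbitrary probability space (Ω_v, Pr_v) (possibly infinite) and each edge function f_{uv} : Ω_u × Ω_v → {0,1} is measurable, and let 𝒟 be its induced probability distribution on simple graphs with vertex set {1,...,n}. Then there exists a coloring model on n vertices in which each vertex's color space is finite with at most 2^{n(n−1)/2} + 1 colors, whose induced distribution on graphs is also 𝒟. -/

import Mathlib

open scoped Classical

structure ColoringModel (n : ℕ) where
  Ω : Fin n → Type
  fin : ∀ v, Fintype (Ω v)
  p : ∀ v, Ω v → ℝ
  nonneg : ∀ v ω, 0 ≤ p v ω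
  sum_one : ∀ v, ∑ ω ∈ @Finset.univ (Ω v) (fin v), p v ω = 1
  f : ∀ u v : Fin n, Ω u → Ω v → Bool
  symm : ∀ u v x y, f u v x y = f v u y x

def ColoringModel.graph {n : ℕ} (M : ColoringModel n) (ω : ∀ v, M.Ω v) :
    SimpleGraph (Fin n) where
  Adj u v := u ≠ v ∧ M.f u v (ω u) (ω v) = true
  symm := ⟨by
    rintro u v ⟨h1, h2⟩
    refine ⟨h1.symm, ?_⟩
    rw [M.symm]
    exact h2⟩
  loopless := ⟨fun u h => h.1 rfl⟩

noncomputable def ColoringModel.pr {n : ℕ} (M : ColoringModel n)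
    (P : SimpleGraph (Fin n) → Prop) : ℝ :=
  letI := M.fin
  ∑ ω : (∀ v, M.Ω v), if P (M.graph ω) then ∏ v, M.p v (ω v) else 0

noncomputable def ColoringModel.dist {n : ℕ} (M : ColoringModel n)
    (G : SimpleGraph (Fin n)) : ℝ :=
  M.pr (fun H => H = G)

structure MColoringModel (n : ℕ) where
  Ω : Fin n → Type
  meas : ∀ v, MeasurableSpace (Ω v)
  μ : ∀ v, @MeasureTheory.Measure (Ω v) (meas v)
  prob : ∀ v, @MeasureTheory.IsProbabilityMeasure (Ω v) (meas v) (μ v)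
  f : ∀ u v : Fin n, Ω u → Ω v → Bool
  symm : ∀ u v x y, f u v x y = f v u y x
  f_meas : ∀ u v : Fin n,
    @Measurable (Ω u × Ω v) Bool (@Prod.instMeasurableSpace _ _ (meas u) (meas v)) _
      (fun q => f u v q.1 q.2)

def MColoringModel.graph {n : ℕ} (M : MColoringModel n) (ω : ∀ v, M.Ω v) :
    SimpleGraph (Fin n) where
  Adj u v := u ≠ v ∧ M.f u v (ω u) (ω v) = true
  symm := ⟨by
    rintro u v ⟨h1, h2⟩
    refine ⟨h1.symm, ?_⟩
    rw [M.symm]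
    exact h2⟩
  loopless := ⟨fun u h => h.1 rfl⟩

noncomputable def MColoringModel.dist {n : ℕ} (M : MColoringModel n)
    (G : SimpleGraph (Fin n)) : ℝ :=
  letI := M.meas
  haveI := M.prob
  (MeasureTheory.Measure.pi M.μ {ω | M.graph ω = G}).toReal

/-!
Fix a vertex `v`. Conditioning on the colour `t` of `v`, the law of the random graph is the
`μ v`-average of the conditional laws `condDist v t`, vectors in `ℝ^N` where `N ≤ 2^(n(n-1)/2)`
is the number of graphs on the vertex set. The mean of a probability measure on a
finite-dimensional space lies in the convex hull of the values it averages, so by Carathéodory it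
is a convex combination of at most `N + 1` of the vectors `condDist v t`. Replacing `μ v` by the
corresponding mixture of at most `N + 1` Dirac masses leaves the law of the graph unchanged, and
doing so at every vertex in turn yields a model with finitely many colours.
-/

open MeasureTheory Module Set
open scoped Pointwise RealInnerProductSpace

section Barycenter

variable {E : Type*} [NormedAddCommGroup E] [InnerProductSpace ℝ E]

theorem exists_mem_forall_inner_pos_of_zero_notMem {K : Set E} (hne : K.Nonempty)
    (hcomplete : IsComplete K) (hconvex : Convex ℝ K) (h0 : (0 : E) ∉ K) :
    ∃ p ∈ K, ∀ x ∈ K, 0 < ⟪p, x⟫ := by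
  obtain ⟨p, hpK, hmin⟩ := exists_norm_eq_iInf_of_complete_convex hne hcomplete hconvex (0 : E)
  have hp0 : p ≠ 0 := by rintro rfl; exact h0 hpK
  refine ⟨p, hpK, fun x hx => ?_⟩
  have h := (norm_eq_iInf_iff_real_inner_le_zero hconvex hpK).1 hmin x hx
  have hpp : 0 < ⟪p, p⟫ := real_inner_self_pos.2 hp0
  simp only [zero_sub, inner_neg_left, inner_sub_right] at h
  linarith

variable [FiniteDimensional ℝ E]

/-- Each finite subfamily of the closed sets `{u | 0 ≤ ⟪u, x⟫}`, `x ∈ s`, meets the unit sphere of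
`span s` (at the normalised minimal-norm point of a finite convex hull); compactness does the rest. -/
theorem exists_mem_span_forall_inner_nonneg_of_zero_notMem_convexHull {s : Set E}
    (hs : s.Nonempty) (h0 : (0 : E) ∉ convexHull ℝ s) :
    ∃ u ∈ Submodule.span ℝ s, u ≠ 0 ∧ ∀ x ∈ s, 0 ≤ ⟪u, x⟫ := by
  obtain ⟨x₀, hx₀⟩ := hs
  have hcompact : IsCompact (Metric.sphere (0 : E) 1 ∩ Submodule.span ℝ s) :=
    (isCompact_sphere 0 1).inter_right (Submodule.span ℝ s).closed_of_finiteDimensional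
  have hclosed (x : s) : IsClosed {u : E | 0 ≤ ⟪u, (x : E)⟫} :=
    isClosed_le continuous_const (continuous_id.inner continuous_const)
  obtain ⟨u, ⟨hu1, hus⟩, hu⟩ := hcompact.inter_iInter_nonempty _ hclosed fun F => by
    set t : Set E := insert x₀ (Subtype.val '' (F : Set s))
    have hts : t ⊆ s := insert_subset hx₀ (by simp)
    have hhull : convexHull ℝ t ⊆ Submodule.span ℝ s :=
      (convexHull_mono hts).trans (convexHull_min Submodule.subset_span (Submodule.convex _))
    have ht : t.Finite := (F.finite_toSet.image Subtype.val).insert x₀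
    obtain ⟨p, hpt, hp⟩ := exists_mem_forall_inner_pos_of_zero_notMem
      ((convexHull_nonempty_iff (𝕜 := ℝ)).2 (insert_nonempty _ _))
      (ht.isCompact_convexHull ℝ).isComplete (convex_convexHull ℝ t)
      (fun h => h0 (convexHull_mono hts h))
    have hp0 : p ≠ 0 := by rintro rfl; exact h0 (convexHull_mono hts hpt)
    refine ⟨‖p‖⁻¹ • p, ⟨by simp [norm_smul, hp0], Submodule.smul_mem _ _ (hhull hpt)⟩, ?_⟩
    refine mem_iInter₂.2 fun x hx => show 0 ≤ ⟪‖p‖⁻¹ • p, (x : E)⟫ from ?_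
    rw [real_inner_smul_left]
    exact mul_nonneg (by positivity)
      (hp x (subset_convexHull ℝ t (mem_insert_of_mem _ ⟨x, hx, rfl⟩))).le
  refine ⟨u, hus, by rintro rfl; simp at hu1, fun x hx => ?_⟩
  exact mem_iInter.1 hu ⟨x, hx⟩

/-- If `0` were not in the hull, a supporting functional `⟪u, ·⟫ ≥ 0` would have integral `0`,
so it vanishes a.e.; modifying `D` off that full-measure set lowers the dimension of the span of
its range. -/
theorem zero_mem_convexHull_range_of_integral_eq_zero {α : Type*} [MeasurableSpace α]
    {μ : Measure α} [IsProbabilityMeasure μ] {D : α → E} (hD : Integrable D μ)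
    (h0 : ∫ a, D a ∂μ = 0) : (0 : E) ∈ convexHull ℝ (range D) := by
  induction hd : finrank ℝ (Submodule.span ℝ (range D)) using Nat.strong_induction_on
    generalizing D with
  | _ d ih =>
    by_contra hnot
    have : Nonempty α := nonempty_of_isProbabilityMeasure μ
    obtain ⟨u, huV, hu0, hu⟩ :=
      exists_mem_span_forall_inner_nonneg_of_zero_notMem_convexHull (range_nonempty D) hnot
    have hu_ae : ∀ᵐ a ∂μ, ⟪u, D a⟫ = 0 := by
      have hint : ∫ a, ⟪u, D a⟫ ∂μ = 0 := by rw [integral_inner hD, h0, inner_zero_right]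
      filter_upwards [(integral_eq_zero_iff_of_nonneg (fun a => hu _ (mem_range_self a))
        (hD.const_inner u)).1 hint] with a ha using ha
    obtain ⟨a₀, ha₀⟩ := hu_ae.exists
    set D' : α → E := fun a => if ⟪u, D a⟫ = 0 then D a else D a₀
    have hD'_ae : D' =ᵐ[μ] D := by filter_upwards [hu_ae] with a ha using if_pos ha
    have hrange : range D' ⊆ range D := by
      rintro _ ⟨a, rfl⟩; dsimp only [D']; split_ifs <;> exact mem_range_self _
    have horth : range D' ⊆ (ℝ ∙ u)ᗮ := by
      rintro _ ⟨a, rfl⟩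
      rw [SetLike.mem_coe, Submodule.mem_orthogonal_singleton_iff_inner_right]
      dsimp only [D']; split_ifs with h <;> assumption
    have hlt : Submodule.span ℝ (range D') < Submodule.span ℝ (range D) := by
      refine lt_of_le_of_ne (Submodule.span_mono hrange) fun heq => hu0 ?_
      have hu' : u ∈ (ℝ ∙ u)ᗮ := Submodule.span_le.2 horth (heq ▸ huV)
      rwa [Submodule.mem_orthogonal_singleton_iff_inner_right, real_inner_self_eq_norm_sq,
        sq_eq_zero_iff, norm_eq_zero] at hu'
    have hmem := ih _ (hd ▸ Submodule.finrank_lt_finrank_of_lt hlt) (hD.congr hD'_ae.symm)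
      (by rw [integral_congr_ae hD'_ae, h0]) rfl
    exact hnot (convexHull_mono hrange hmem)

theorem integral_mem_convexHull_range {α : Type*} [MeasurableSpace α] {μ : Measure α}
    [IsProbabilityMeasure μ] {D : α → E} (hD : Integrable D μ) :
    ∫ a, D a ∂μ ∈ convexHull ℝ (range D) := by
  set b := ∫ a, D a ∂μ
  have hcentered : Integrable (fun a => D a - b) μ := hD.sub (integrable_const b)
  have h := zero_mem_convexHull_range_of_integral_eq_zero hcentered
    (by rw [integral_sub hD (integrable_const b)]; simp [b])
  have hrange : range (fun a => D a - b) = (-b) +ᵥ range D := by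
    rw [← image_vadd, ← range_comp]; simp [sub_eq_neg_add, Function.comp_def]
  rwa [hrange, convexHull_vadd, mem_vadd_set_iff_neg_vadd_mem, vadd_eq_add, neg_neg,
    add_zero] at h

end Barycenter

namespace MeasureTheory.Measure

/-- `ρ` is a convex combination of at most `N` Dirac masses, encoded as the image of a probability
measure on `Fin k`, `k ≤ N`. -/
def IsDiracMixture {α : Type*} [MeasurableSpace α] (ρ : Measure α) (N : ℕ) : Prop :=
  ∃ k ≤ N, ∃ (ν : Measure (Fin k)) (x : Fin k → α), IsProbabilityMeasure ν ∧ ν.map x = ρ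

theorem IsDiracMixture.isProbabilityMeasure {α : Type*} [MeasurableSpace α] {ρ : Measure α}
    {N : ℕ} (hρ : ρ.IsDiracMixture N) : IsProbabilityMeasure ρ := by
  obtain ⟨k, -, ν, x, hν, rfl⟩ := hρ
  exact isProbabilityMeasure_map (Measurable.of_discrete).aemeasurable

end MeasureTheory.Measure

theorem exists_isDiracMixture_integral_eq {α E : Type*} [MeasurableSpace α] {μ : Measure α}
    [IsProbabilityMeasure μ] [NormedAddCommGroup E] [InnerProductSpace ℝ E]
    [FiniteDimensional ℝ E] [MeasurableSpace E] [BorelSpace E] {D : α → E} (hDm : Measurable D)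
    (hD : Integrable D μ) :
    ∃ ρ : Measure α, ρ.IsDiracMixture (finrank ℝ E + 1) ∧ ∫ a, D a ∂ρ = ∫ a, D a ∂μ := by
  obtain ⟨ι, _, z, w, hz, hind, hw, hw1, hb⟩ :=
    eq_pos_convex_span_of_mem_convexHull (integral_mem_convexHull_range hD)
  choose x hx using fun i => hz (mem_range_self i)
  have hcard : Fintype.card ι ≤ finrank ℝ E + 1 :=
    hind.card_le_finrank_succ.trans (Nat.succ_le_succ (Submodule.finrank_le _))
  set e := (Fintype.equivFin ι).symm
  set ν : Measure (Fin (Fintype.card ι)) := ∑ j, ENNReal.ofReal (w (e j)) • Measure.dirac j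
  have hν : ∀ j, ν.real {j} = w (e j) := fun j => by
    simp [ν, Measure.real, Pi.single_apply, (hw _).le]
  have hνprob : IsProbabilityMeasure ν := by
    refine ⟨?_⟩
    simp [ν, ← ENNReal.ofReal_sum_of_nonneg fun j _ => (hw (e j)).le, e.sum_comp w, hw1]
  refine ⟨ν.map (x ∘ e), ⟨_, hcard, ν, x ∘ e, hνprob, rfl⟩, ?_⟩
  rw [integral_map Measurable.of_discrete.aemeasurable hDm.aestronglyMeasurable,
    integral_fintype (Integrable.of_finite), ← hb, ← e.sum_comp]
  simp [hν, hx]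

namespace MeasureTheory.Measure

variable {ι : Type*} [Fintype ι] [DecidableEq ι] {X : ι → Type*} [∀ i, MeasurableSpace (X i)]

theorem map_update_prod_eq_pi_update (μ : ∀ i, Measure (X i)) [∀ i, IsProbabilityMeasure (μ i)]
    (i₀ : ι) (ρ : Measure (X i₀)) [SigmaFinite ρ] :
    ((Measure.pi μ).prod ρ).map (fun p => Function.update p.1 i₀ p.2) =
      Measure.pi (Function.update μ i₀ ρ) := by
  have (i : ι) : SigmaFinite (Function.update μ i₀ ρ i) := by
    rcases eq_or_ne i i₀ with rfl | hi
    · rw [Function.update_self]; infer_instance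
    · rw [Function.update_of_ne hi]; infer_instance
  refine (pi_eq fun s hs => ?_).symm
  have hpre : (fun p : (∀ i, X i) × X i₀ => Function.update p.1 i₀ p.2) ⁻¹' univ.pi s =
      univ.pi (Function.update s i₀ univ) ×ˢ s i₀ := by
    ext ⟨ω, t⟩
    simp only [mem_preimage, mem_univ_pi, mem_prod,
      Function.forall_update_iff _ (fun i x => x ∈ s i)]
    grind
  rw [map_apply measurable_update' (.univ_pi hs), hpre, prod_prod, pi_pi,
    Fintype.prod_eq_mul_prod_compl i₀, Fintype.prod_eq_mul_prod_compl i₀]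
  simp only [Function.update_self, measure_univ, one_mul]
  rw [mul_comm]
  congr 1
  refine Finset.prod_congr rfl fun i hi => ?_
  have hi : i ≠ i₀ := by simpa using hi
  simp [Function.update_of_ne hi]

theorem pi_update_apply (μ : ∀ i, Measure (X i)) [∀ i, IsProbabilityMeasure (μ i)] (i₀ : ι)
    (ρ : Measure (X i₀)) [SigmaFinite ρ] {S : Set (∀ i, X i)} (hS : MeasurableSet S) :
    Measure.pi (Function.update μ i₀ ρ) S =
      ∫⁻ t, Measure.pi μ ((fun ω => Function.update ω i₀ t) ⁻¹' S) ∂ρ := by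
  rw [← map_update_prod_eq_pi_update, map_apply measurable_update' hS,
    prod_apply_symm (measurable_update' hS)]
  rfl

end MeasureTheory.Measure

theorem MeasureTheory.measureReal_eq_sum_ite {α : Type*} [Fintype α] [MeasurableSpace α]
    [MeasurableSingletonClass α] (μ : Measure α) [IsFiniteMeasure μ] (s : Set α) :
    μ.real s = ∑ a, if a ∈ s then μ.real {a} else 0 := by
  rw [← Finset.sum_filter, sum_measureReal_singleton]
  simp

theorem SimpleGraph.card_le_two_pow_choose_two {V : Type*} [Fintype V] [DecidableEq V] :
    Fintype.card (SimpleGraph V) ≤ 2 ^ (Fintype.card V).choose 2 := by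
  have hinj : Function.Injective fun G : SimpleGraph V =>
      (⟨G.edgeFinset, Finset.mem_powerset.2 (edgeFinset_mono le_top)⟩ :
        (⊤ : SimpleGraph V).edgeFinset.powerset) :=
    fun G H h => edgeFinset_inj.1 (congrArg Subtype.val h)
  calc Fintype.card (SimpleGraph V)
      ≤ Fintype.card (⊤ : SimpleGraph V).edgeFinset.powerset :=
        Fintype.card_le_of_injective _ hinj
    _ = 2 ^ (Fintype.card V).choose 2 := by
      rw [Fintype.card_coe, Finset.card_powerset, card_edgeFinset_top_eq_card_choose_two]

namespace MColoringModel

variable {n : ℕ} (M : MColoringModel n)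

instance instMeasurableSpace (v : Fin n) : MeasurableSpace (M.Ω v) := M.meas v

instance instIsProbabilityMeasure (v : Fin n) : IsProbabilityMeasure (M.μ v) := M.prob v

def withMeasureAt (v₀ : Fin n) (ρ : Measure (M.Ω v₀)) (hρ : IsProbabilityMeasure ρ) :
    MColoringModel n where
  Ω := M.Ω
  meas := M.meas
  μ := Function.update M.μ v₀ ρ
  prob v := by
    rcases eq_or_ne v v₀ with rfl | hv
    · rwa [Function.update_self]
    · rw [Function.update_of_ne hv]; exact M.prob v
  f := M.f
  symm := M.symm
  f_meas := M.f_meas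

theorem measurable_edgeIndicator :
    Measurable fun (ω : ∀ v, M.Ω v) (u w : Fin n) => M.f u w (ω u) (ω w) :=
  measurable_pi_lambda _ fun u => measurable_pi_lambda _ fun w =>
    (M.f_meas u w).comp ((measurable_pi_apply u).prodMk (measurable_pi_apply w))

theorem measurableSet_graph_eq (G : SimpleGraph (Fin n)) :
    MeasurableSet {ω : ∀ v, M.Ω v | M.graph ω = G} := by
  have : {ω : ∀ v, M.Ω v | M.graph ω = G} = (fun ω (u w : Fin n) => M.f u w (ω u) (ω w)) ⁻¹'
      {b | ∀ u w, (u ≠ w ∧ b u w = true) ↔ G.Adj u w} := by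
    ext ω
    simp only [mem_ofPred_eq, mem_preimage, SimpleGraph.ext_iff, funext_iff, eq_iff_iff]
    rfl
  rw [this]
  exact M.measurable_edgeIndicator (Set.toFinite _).measurableSet

noncomputable def condDist (v₀ : Fin n) (t : M.Ω v₀) (G : SimpleGraph (Fin n)) : ℝ :=
  (Measure.pi M.μ).real {ω | M.graph (Function.update ω v₀ t) = G}

theorem measurableSet_update_preimage_graph_eq (v₀ : Fin n) (G : SimpleGraph (Fin n)) :
    MeasurableSet {p : (∀ v, M.Ω v) × M.Ω v₀ | M.graph (Function.update p.1 v₀ p.2) = G} :=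
  measurable_update' (M.measurableSet_graph_eq G)

theorem measurable_condDist (v₀ : Fin n) (G : SimpleGraph (Fin n)) :
    Measurable fun t => M.condDist v₀ t G :=
  (measurable_measure_prodMk_right
    (M.measurableSet_update_preimage_graph_eq v₀ G)).ennreal_toReal

theorem dist_withMeasureAt (v₀ : Fin n) (ρ : Measure (M.Ω v₀)) (hρ : IsProbabilityMeasure ρ)
    (G : SimpleGraph (Fin n)) :
    (M.withMeasureAt v₀ ρ hρ).dist G = ∫ t, M.condDist v₀ t G ∂ρ := by
  have hmeas : Measurable fun t =>
      Measure.pi M.μ ((fun ω => Function.update ω v₀ t) ⁻¹' {ω | M.graph ω = G}) :=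
    measurable_measure_prodMk_right (M.measurableSet_update_preimage_graph_eq v₀ G)
  calc (M.withMeasureAt v₀ ρ hρ).dist G
      = (Measure.pi (Function.update M.μ v₀ ρ) {ω | M.graph ω = G}).toReal := rfl
    _ = _ := by
      rw [Measure.pi_update_apply M.μ v₀ ρ (M.measurableSet_graph_eq G),
        ← integral_toReal hmeas.aemeasurable (ae_of_all _ fun _ => measure_lt_top _ _)]
      rfl

theorem dist_eq_integral_condDist (v₀ : Fin n) (G : SimpleGraph (Fin n)) :
    M.dist G = ∫ t, M.condDist v₀ t G ∂(M.μ v₀) := by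
  rw [← M.dist_withMeasureAt v₀ (M.μ v₀) inferInstance]
  simp only [dist, withMeasureAt, Function.update_eq_self]
  rfl

theorem norm_condDist_le_one (v₀ : Fin n) (t : M.Ω v₀) (G : SimpleGraph (Fin n)) :
    ‖M.condDist v₀ t G‖ ≤ 1 := by
  rw [condDist, Real.norm_of_nonneg measureReal_nonneg]
  exact measureReal_le_one

theorem exists_isDiracMixture_dist_withMeasureAt_eq (v₀ : Fin n) :
    ∃ (ρ : Measure (M.Ω v₀)) (hρ : ρ.IsDiracMixture (Fintype.card (SimpleGraph (Fin n)) + 1)),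
      ∀ G, (M.withMeasureAt v₀ ρ hρ.isProbabilityMeasure).dist G = M.dist G := by
  set D : M.Ω v₀ → EuclideanSpace ℝ (SimpleGraph (Fin n)) :=
    fun t => WithLp.toLp 2 fun G => M.condDist v₀ t G
  have hDm : Measurable D :=
    (WithLp.measurable_toLp 2 _).comp
      (measurable_pi_lambda _ fun G => M.measurable_condDist v₀ G)
  have hD (ν : Measure (M.Ω v₀)) [IsProbabilityMeasure ν] : Integrable D ν := by
    refine .of_bound hDm.aestronglyMeasurable √(Fintype.card (SimpleGraph (Fin n)))
      (ae_of_all _ fun t => ?_)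
    rw [EuclideanSpace.norm_eq]
    refine Real.sqrt_le_sqrt ((Finset.sum_le_card_nsmul _ _ 1 fun G _ => ?_).trans (by simp))
    exact pow_le_one₀ (norm_nonneg _) (M.norm_condDist_le_one v₀ t G)
  have hcoord (ν : Measure (M.Ω v₀)) [IsProbabilityMeasure ν] (G : SimpleGraph (Fin n)) :
      ∫ t, M.condDist v₀ t G ∂ν = (∫ t, D t ∂ν) G :=
    (EuclideanSpace.proj G).integral_comp_comm (hD ν)
  obtain ⟨ρ, hρ, heq⟩ := exists_isDiracMixture_integral_eq hDm (hD (M.μ v₀))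
  rw [finrank_euclideanSpace] at hρ
  have := hρ.isProbabilityMeasure
  refine ⟨ρ, hρ, fun G => ?_⟩
  rw [dist_withMeasureAt, dist_eq_integral_condDist M v₀, hcoord, hcoord, heq]

theorem exists_dist_eq_forall_isDiracMixture :
    ∃ M' : MColoringModel n, (∀ G, M'.dist G = M.dist G) ∧
      ∀ v, (M'.μ v).IsDiracMixture (Fintype.card (SimpleGraph (Fin n)) + 1) := by
  suffices h : ∀ S : Finset (Fin n), ∃ M' : MColoringModel n, (∀ G, M'.dist G = M.dist G) ∧
      ∀ v ∈ S, (M'.μ v).IsDiracMixture (Fintype.card (SimpleGraph (Fin n)) + 1) by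
    obtain ⟨M', hdist, hmix⟩ := h Finset.univ
    exact ⟨M', hdist, fun v => hmix v (Finset.mem_univ v)⟩
  intro S
  induction S using Finset.induction_on with
  | empty => exact ⟨M, fun _ => rfl, by simp⟩
  | @insert v₀ S hv₀ ih =>
    obtain ⟨M₁, hdist₁, hmix₁⟩ := ih
    obtain ⟨ρ, hρ, hdist⟩ := M₁.exists_isDiracMixture_dist_withMeasureAt_eq v₀
    refine ⟨M₁.withMeasureAt v₀ ρ hρ.isProbabilityMeasure,
      fun G => (hdist G).trans (hdist₁ G), fun v hv => ?_⟩
    rcases Finset.mem_insert.1 hv with rfl | hvS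
    · show (Function.update M₁.μ v ρ v).IsDiracMixture _
      rwa [Function.update_self]
    · show (Function.update M₁.μ v₀ ρ v).IsDiracMixture _
      rw [Function.update_of_ne (ne_of_mem_of_not_mem hvS hv₀)]
      exact hmix₁ v hvS

noncomputable def pullbackFin {k : Fin n → ℕ} (ν : ∀ v, Measure (Fin (k v)))
    (hν : ∀ v, IsProbabilityMeasure (ν v)) (x : ∀ v, Fin (k v) → M.Ω v) :
    ColoringModel n where
  Ω v := Fin (k v)
  fin _ := inferInstance
  p v i := (ν v).real {i}
  nonneg _ _ := measureReal_nonneg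
  sum_one v := by simp
  f u v i j := M.f u v (x u i) (x v j)
  symm u v i j := M.symm u v (x u i) (x v j)

theorem dist_pullbackFin {k : Fin n → ℕ} (ν : ∀ v, Measure (Fin (k v)))
    (hν : ∀ v, IsProbabilityMeasure (ν v)) (x : ∀ v, Fin (k v) → M.Ω v)
    (hx : ∀ v, (ν v).map (x v) = M.μ v) (G : SimpleGraph (Fin n)) :
    (M.pullbackFin ν hν x).dist G = M.dist G := by
  have hT : Measurable fun (c : ∀ v, Fin (k v)) v => x v (c v) :=
    measurable_pi_lambda _ fun v => Measurable.of_discrete.comp (measurable_pi_apply v)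
  have hpi : Measure.pi M.μ = (Measure.pi ν).map fun c v => x v (c v) := by
    rw [Measure.pi_map_pi fun v => Measurable.of_discrete.aemeasurable]
    exact congrArg Measure.pi (funext fun v => (hx v).symm)
  calc (M.pullbackFin ν hν x).dist G
      = ∑ c : ∀ v, Fin (k v), if M.graph (fun v => x v (c v)) = G
          then ∏ v, (ν v).real {c v} else 0 := rfl
    _ = (Measure.pi ν).real ((fun c v => x v (c v)) ⁻¹' {ω | M.graph ω = G}) := by
      rw [measureReal_eq_sum_ite]
      simp [Measure.real, ENNReal.toReal_prod]
    _ = M.dist G := by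
      rw [dist, hpi, Measure.map_apply hT (M.measurableSet_graph_eq G)]
      rfl

end MColoringModel

theorem finitely_many_colors_suffice (n : ℕ) (M : MColoringModel n) :
    ∃ M' : ColoringModel n,
      (∀ v, Nat.card (M'.Ω v) ≤ 2 ^ (n * (n - 1) / 2) + 1) ∧
      ∀ G : SimpleGraph (Fin n), M'.dist G = M.dist G := by
  obtain ⟨M₁, hdist, hmix⟩ := M.exists_dist_eq_forall_isDiracMixture
  choose k hk ν x hν hx using hmix
  refine ⟨M₁.pullbackFin ν hν x, fun v => ?_,
    fun G => (M₁.dist_pullbackFin ν hν x hx G).trans (hdist G)⟩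
  have hcard := SimpleGraph.card_le_two_pow_choose_two (V := Fin n)
  rw [Fintype.card_fin, Nat.choose_two_right] at hcard
  calc Nat.card (Fin (k v)) = k v := Nat.card_fin _
    _ ≤ 2 ^ (n * (n - 1) / 2) + 1 := (hk v).trans (by omega)
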